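/- In the Bayesian model, the Modified Bayes estimator δ*_B(X,S²) = (1 − S²/(S²+nτ²))(X−ν) + ν has Bayes risk R(δ*_B; ν, τ², σ²) = pσ²·{1 + n(n+2)(1+τ²/σ²)·E_{χ²_{n+4}}[1/(u+nτ²/σ²)²] − 2n·E_{χ²_{n+2}}[1/(u+nτ²/σ²)]}. -/

import Mathlib

open MeasureTheory ProbabilityTheory Filter

/-- The chi-square distribution with `m` degrees of freedom: the Gamma distribution
with shape `m/2` and rate `1/2`. -/
noncomputable def chiSq (m : ℕ) : Measure ℝ := gammaMeasure ((m : ℝ) / 2) (1 / 2)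

/-- Expectation of `f` under the chi-square distribution with `m` degrees of freedom. -/
noncomputable def chiSqExp (m : ℕ) (f : ℝ → ℝ) : ℝ := ∫ u, f u ∂(chiSq m)

/-- `N_p(θ, v I_p)`: the measure on `ℝ^p` under which the coordinates are independent
Gaussians, coordinate `i` having mean `θ i` and variance `v`. -/
noncomputable def normalPi (p : ℕ) (θ : Fin p → ℝ) (v : ℝ) : Measure (Fin p → ℝ) :=
  Measure.pi fun i => gaussianReal (θ i) v.toNNReal

/-- Bayes risk of an estimator `δ(X, S²)` in the model
`θ ~ N_p(ν, τ²I_p)`, `X | θ ~ N_p(θ, σ²I_p)`, `S² = σ²U` with `U ~ χ²_n`,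
as the iterated integral `E_θ E_{S²} E_{X|θ} ‖δ(X,S²) − θ‖²`
(the squared Euclidean norm being the sum of squared coordinates). -/
noncomputable def bayesRisk (p n : ℕ) (ν : Fin p → ℝ) (τ2 σ2 : ℝ)
    (δ : (Fin p → ℝ) → ℝ → Fin p → ℝ) : ℝ :=
  ∫ θ, ∫ u, ∫ x, (∑ i, (δ x (σ2 * u) i - θ i) ^ 2) ∂(normalPi p θ σ2)
    ∂(chiSq n) ∂(normalPi p ν τ2)

/-- The Modified Bayes estimator `δ*_B(X,S²) = (1 − S²/(S²+nτ²))(X−ν) + ν`. -/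
noncomputable def modBayes (p n : ℕ) (ν : Fin p → ℝ) (τ2 : ℝ) :
    (Fin p → ℝ) → ℝ → Fin p → ℝ :=
  fun x s2 i => (1 - s2 / (s2 + n * τ2)) * (x i - ν i) + ν i

/-- The general shrinkage estimator `δ*c(X,S²) = (1 − c·S²/‖X−ν‖²)(X−ν) + ν`. -/
noncomputable def shrinkEst (p : ℕ) (ν : Fin p → ℝ) (c : ℝ) :
    (Fin p → ℝ) → ℝ → Fin p → ℝ :=
  fun x s2 i => (1 - c * s2 / (∑ j, (x j - ν j) ^ 2)) * (x i - ν i) + ν i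

/-- The Empirical Modified Bayes estimator
`δ*_EB(X,S²) = (1 − ((p−2)/(n+2))·S²/‖X−ν‖²)(X−ν) + ν`. -/
noncomputable def empModBayes (p n : ℕ) (ν : Fin p → ℝ) :
    (Fin p → ℝ) → ℝ → Fin p → ℝ :=
  shrinkEst p ν (((p : ℝ) - 2) / ((n : ℝ) + 2))

/-! Put `t = nτ²/σ²` and `w(u) = u/(u + t)`. At `S² = σ²u` the error of `δ*_B` is
`(1 - w)(X - θ) - w(θ - ν)`, so its conditional risk given `θ, u` is
`pσ²(1 - w)² + w²‖θ - ν‖²`, and averaging over `u ~ χ²_n` and `θ` gives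
`pσ²(1 - 2E[w] + E[w²]) + pτ²E[w²]`. The chi-square densities satisfy `u f_m(u) = m f_{m+2}(u)`,
so `E_{χ²_m}[U g(U)] = m E_{χ²_{m+2}}[g]`, which turns `E[w]` and `E[w²]` into the stated
`χ²_{n+2}` and `χ²_{n+4}` expectations. -/

open Real
open scoped NNReal

namespace ProbabilityTheory

lemma measurable_gammaPDF (a r : ℝ) : Measurable (gammaPDF a r) :=
  (measurable_gammaPDFReal a r).ennreal_ofReal

lemma integral_gammaMeasure {a r : ℝ} (ha : 0 < a) (hr : 0 < r) (g : ℝ → ℝ) :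
    ∫ x, g x ∂gammaMeasure a r = ∫ x, gammaPDFReal a r x * g x := by
  rw [gammaMeasure, integral_withDensity_eq_integral_toReal_smul (measurable_gammaPDF a r)
    (ae_of_all _ fun _ => ENNReal.ofReal_lt_top)]
  simp_rw [gammaPDF, ENNReal.toReal_ofReal (gammaPDFReal_nonneg ha hr _), smul_eq_mul]

lemma mul_gammaPDFReal {a r : ℝ} (ha : 0 < a) (hr : 0 < r) (x : ℝ) :
    x * gammaPDFReal a r x = a / r * gammaPDFReal (a + 1) r x := by
  unfold gammaPDFReal
  split_ifs with hx
  · have hpow : x ^ (a + 1 - 1) = x ^ (a - 1) * x := by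
      rw [← rpow_add_one' hx (by simpa using ha.ne'), sub_add_cancel, add_sub_cancel_right]
    rw [hpow, rpow_add_one hr.ne', Gamma_add_one ha.ne']
    have hΓ := (Gamma_pos_of_pos ha).ne'
    field_simp
  · simp

lemma integral_mul_gammaMeasure {a r : ℝ} (ha : 0 < a) (hr : 0 < r) (g : ℝ → ℝ) :
    ∫ x, x * g x ∂gammaMeasure a r = a / r * ∫ x, g x ∂gammaMeasure (a + 1) r := by
  rw [integral_gammaMeasure ha hr, integral_gammaMeasure (by linarith) hr, ← integral_const_mul]
  congr with x
  rw [← mul_assoc, mul_comm _ x, mul_gammaPDFReal ha hr, mul_assoc]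

lemma ae_nonneg_gammaMeasure (a r : ℝ) : ∀ᵐ x ∂gammaMeasure a r, 0 ≤ x := by
  rw [gammaMeasure, ae_withDensity_iff (measurable_gammaPDF a r)]
  refine ae_of_all _ fun x hx => ?_
  by_contra hneg
  exact hx (gammaPDF_of_neg (not_le.mp hneg))

lemma integrable_sq_affine_gaussianReal (μ : ℝ) (v : ℝ≥0) (c e : ℝ) :
    Integrable (fun x => (c * (x - μ) + e) ^ 2) (gaussianReal μ v) :=
  ((((memLp_id_gaussianReal 2).sub (memLp_const μ)).const_mul c).add (memLp_const e)).integrable_sq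

lemma integral_sq_affine_gaussianReal (μ : ℝ) (v : ℝ≥0) (c e : ℝ) :
    ∫ x, (c * (x - μ) + e) ^ 2 ∂gaussianReal μ v = c ^ 2 * v + e ^ 2 := by
  have hvar : ∫ x, (x - μ) ^ 2 ∂gaussianReal μ v = v := by
    simpa [variance_eq_integral measurable_id.aemeasurable] using
      variance_id_gaussianReal (μ := μ) (v := v)
  have hid : Integrable (fun x => x) (gaussianReal μ v) :=
    (memLp_id_gaussianReal 1).integrable le_rfl
  have hmean : ∫ x, (x - μ) ∂gaussianReal μ v = 0 := by
    rw [integral_sub hid (integrable_const μ)]; simp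
  have hcen : Integrable (fun x => 2 * c * e * (x - μ)) (gaussianReal μ v) :=
    (hid.sub (integrable_const μ)).const_mul _
  have hsq : Integrable (fun x => c ^ 2 * (x - μ) ^ 2) (gaussianReal μ v) :=
    ((memLp_id_gaussianReal 2).sub (memLp_const μ)).integrable_sq.const_mul _
  calc ∫ x, (c * (x - μ) + e) ^ 2 ∂gaussianReal μ v
      = ∫ x, (c ^ 2 * (x - μ) ^ 2 + 2 * c * e * (x - μ) + e ^ 2) ∂gaussianReal μ v := by
        congr with x; ring
    _ = c ^ 2 * v + e ^ 2 := by
        rw [integral_add (hsq.fun_add hcen) (integrable_const _), integral_add hsq hcen,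
          integral_const_mul, integral_const_mul, hvar, hmean]
        simp

end ProbabilityTheory

instance (p : ℕ) (θ : Fin p → ℝ) (v : ℝ) : IsProbabilityMeasure (normalPi p θ v) := by
  unfold normalPi; infer_instance

section normalPi

variable {p : ℕ} (θ : Fin p → ℝ) {v : ℝ} (c : ℝ) (e : Fin p → ℝ)

lemma integrable_sq_affine_normalPi (i : Fin p) :
    Integrable (fun x => (c * (x i - θ i) + e i) ^ 2) (normalPi p θ v) := by
  unfold normalPi
  exact integrable_comp_eval (X := fun _ => ℝ) (i := i) (f := fun y => (c * (y - θ i) + e i) ^ 2)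
    (integrable_sq_affine_gaussianReal (θ i) _ c (e i))

lemma integrable_sum_sq_normalPi :
    Integrable (fun x => ∑ i, (c * (x i - θ i) + e i) ^ 2) (normalPi p θ v) :=
  integrable_finsetSum _ fun i _ => integrable_sq_affine_normalPi θ c e i

lemma integral_sum_sq_normalPi (hv : 0 ≤ v) :
    ∫ x, ∑ i, (c * (x i - θ i) + e i) ^ 2 ∂normalPi p θ v =
      p * (c ^ 2 * v) + ∑ i, e i ^ 2 := by
  have hcoord (i : Fin p) :
      ∫ x, (c * (x i - θ i) + e i) ^ 2 ∂normalPi p θ v = c ^ 2 * v + e i ^ 2 := by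
    rw [normalPi, integral_comp_eval (X := fun _ => ℝ) (i := i)
      (f := fun y => (c * (y - θ i) + e i) ^ 2) (by fun_prop),
      integral_sq_affine_gaussianReal, Real.coe_toNNReal _ hv]
  rw [integral_finsetSum _ fun i _ => integrable_sq_affine_normalPi θ c e i]
  simp [hcoord, Finset.sum_add_distrib]

end normalPi

instance (m : ℕ) [NeZero m] : IsProbabilityMeasure (chiSq m) :=
  isProbabilityMeasure_gammaMeasure (by have := NeZero.pos m; positivity) (by norm_num)

lemma ae_nonneg_chiSq (m : ℕ) : ∀ᵐ u ∂chiSq m, 0 ≤ u := ae_nonneg_gammaMeasure _ _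

lemma integral_mul_chiSq {m : ℕ} (hm : 0 < m) (g : ℝ → ℝ) :
    ∫ u, u * g u ∂chiSq m = m * ∫ u, g u ∂chiSq (m + 2) := by
  rw [chiSq, integral_mul_gammaMeasure (by positivity) (by norm_num), chiSq]
  congr 2
  · ring
  · congr 1; push_cast; ring

lemma integrable_div_add_pow {μ : Measure ℝ} [IsFiniteMeasure μ] (hμ : ∀ᵐ u ∂μ, 0 ≤ u)
    {t : ℝ} (ht : 0 < t) (k : ℕ) : Integrable (fun u => (u / (u + t)) ^ k) μ := by
  refine Integrable.of_bound (Measurable.aestronglyMeasurable (by fun_prop)) 1 ?_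
  filter_upwards [hμ] with u hu
  rw [norm_pow, Real.norm_of_nonneg (by positivity)]
  exact pow_le_one₀ (by positivity) ((div_le_one (by positivity)).mpr (by linarith))

lemma integral_div_add_chiSq {m : ℕ} (hm : 0 < m) (t : ℝ) :
    ∫ u, u / (u + t) ∂chiSq m = m * chiSqExp (m + 2) (fun u => 1 / (u + t)) := by
  have hdiv (u : ℝ) : u / (u + t) = u * (1 / (u + t)) := (mul_one_div _ _).symm
  simp_rw [hdiv]
  exact integral_mul_chiSq hm _

lemma integral_div_add_sq_chiSq {m : ℕ} (hm : 0 < m) (t : ℝ) :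
    ∫ u, (u / (u + t)) ^ 2 ∂chiSq m =
      m * (m + 2) * chiSqExp (m + 4) (fun u => 1 / (u + t) ^ 2) := by
  have hsq (u : ℝ) : (u / (u + t)) ^ 2 = u * (u * (1 / (u + t) ^ 2)) := by
    rw [div_pow]; ring
  simp_rw [hsq]
  rw [integral_mul_chiSq hm, integral_mul_chiSq (by omega), chiSqExp]
  push_cast
  ring

lemma modBayes_apply_sub {p n : ℕ} {ν : Fin p → ℝ} {τ2 σ2 : ℝ} (hσ2 : σ2 ≠ 0)
    (x θ : Fin p → ℝ) (u : ℝ) (i : Fin p) :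
    modBayes p n ν τ2 x (σ2 * u) i - θ i =
      (1 - u / (u + n * (τ2 / σ2))) * (x i - θ i) +
        -(u / (u + n * (τ2 / σ2)) * (θ i - ν i)) := by
  have hw : σ2 * u / (σ2 * u + n * τ2) = u / (u + n * (τ2 / σ2)) := by
    rw [← mul_div_mul_left u _ hσ2]
    congr 1
    field_simp
  rw [modBayes, hw]
  ring

lemma integral_sum_sq_modBayes_sub {p n : ℕ} (ν θ : Fin p → ℝ) {τ2 σ2 : ℝ} (hσ2 : 0 < σ2)
    (u : ℝ) :
    ∫ x, ∑ i, (modBayes p n ν τ2 x (σ2 * u) i - θ i) ^ 2 ∂normalPi p θ σ2 =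
      p * σ2 * (1 - u / (u + n * (τ2 / σ2))) ^ 2 +
        (u / (u + n * (τ2 / σ2))) ^ 2 * ∑ i, (θ i - ν i) ^ 2 := by
  simp_rw [modBayes_apply_sub hσ2.ne']
  rw [integral_sum_sq_normalPi θ _ _ hσ2.le]
  simp only [neg_sq, mul_pow, ← Finset.mul_sum]
  ring

lemma integral_mul_one_sub_sq_add_sq_mul {α : Type*} [MeasurableSpace α] {μ : Measure α}
    [IsProbabilityMeasure μ] {w : α → ℝ} (hw : Integrable w μ)
    (hw2 : Integrable (fun u => w u ^ 2) μ) (a q : ℝ) :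
    ∫ u, (a * (1 - w u) ^ 2 + w u ^ 2 * q) ∂μ =
      a * (1 - 2 * ∫ u, w u ∂μ + ∫ u, w u ^ 2 ∂μ) + (∫ u, w u ^ 2 ∂μ) * q := by
  have hexpand (u : α) :
      a * (1 - w u) ^ 2 + w u ^ 2 * q = a - 2 * a * w u + (a + q) * w u ^ 2 := by ring
  simp_rw [hexpand]
  rw [integral_add ((integrable_const a).sub' (hw.const_mul _)) (hw2.const_mul _),
    integral_sub (integrable_const a) (hw.const_mul _), integral_const, integral_const_mul,
    integral_const_mul (a + q)]
  simp only [probReal_univ, smul_eq_mul, one_mul]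
  ring

theorem stmt_5_general (p n : ℕ) (hn : 1 ≤ n) (ν : Fin p → ℝ) (τ2 σ2 : ℝ)
    (hτ2 : 0 < τ2) (hσ2 : 0 < σ2) :
    bayesRisk p n ν τ2 σ2 (modBayes p n ν τ2) =
      (p : ℝ) * σ2 * (1 + (n : ℝ) * ((n : ℝ) + 2) * (1 + τ2 / σ2) *
          chiSqExp (n + 4) (fun u => 1 / (u + (n : ℝ) * (τ2 / σ2)) ^ 2) -
        2 * (n : ℝ) * chiSqExp (n + 2) (fun u => 1 / (u + (n : ℝ) * (τ2 / σ2)))) := by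
  have : NeZero n := ⟨by omega⟩
  unfold _root_.bayesRisk
  simp_rw [integral_sum_sq_modBayes_sub ν _ hσ2]
  set t := (n : ℝ) * (τ2 / σ2)
  have ht : 0 < t := by positivity
  have hw : Integrable (fun u => u / (u + t)) (chiSq n) := by
    simpa using integrable_div_add_pow (ae_nonneg_chiSq n) ht 1
  simp_rw [integral_mul_one_sub_sq_add_sq_mul hw (integrable_div_add_pow (ae_nonneg_chiSq n) ht 2),
    integral_div_add_chiSq hn, integral_div_add_sq_chiSq hn]
  have hQ : ∫ θ, ∑ i, (θ i - ν i) ^ 2 ∂normalPi p ν τ2 = p * τ2 := by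
    simpa using integral_sum_sq_normalPi ν 1 0 hτ2.le
  have hQint : Integrable (fun θ => ∑ i, (θ i - ν i) ^ 2) (normalPi p ν τ2) := by
    simpa using integrable_sum_sq_normalPi ν (v := τ2) 1 0
  rw [integral_add (integrable_const _) (hQint.const_mul _), integral_const, integral_const_mul, hQ]
  simp only [probReal_univ, smul_eq_mul, one_mul]
  field_simp
  ring

theorem stmt_5 (p n : ℕ) (hp : 1 ≤ p) (hn : 1 ≤ n) (ν : Fin p → ℝ) (τ2 σ2 : ℝ)
    (hτ2 : 0 < τ2) (hσ2 : 0 < σ2) :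
    bayesRisk p n ν τ2 σ2 (modBayes p n ν τ2) =
      (p : ℝ) * σ2 * (1 + (n : ℝ) * ((n : ℝ) + 2) * (1 + τ2 / σ2) *
          chiSqExp (n + 4) (fun u => 1 / (u + (n : ℝ) * (τ2 / σ2)) ^ 2) -
        2 * (n : ℝ) * chiSqExp (n + 2) (fun u => 1 / (u + (n : ℝ) * (τ2 / σ2)))) :=
  stmt_5_general p n hn ν τ2 σ2 hτ2 hσ2
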